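/- arXiv:1504.03065 — 5 statements merged into one kernel-verified Lean document; each statement's English description precedes it below -/
import Mathlib

section
/- For every integer d ≥ 5, λ_{2^d−1} < log₂(2^d − 2). -/
/-- The bricklayer's graph `G_n`: vertices `0, …, n-1`, adjacent iff their binary
expansions differ in exactly one bit (i.e. their XOR is a power of two). -/
def bricklayerGraph (n : ℕ) : SimpleGraph (Fin n) where
  Adj u v := ∃ k : ℕ, (u.val ^^^ v.val) = 2 ^ k
  symm := by
    constructor
    rintro u v ⟨k, h⟩
    exact ⟨k, by rwa [Nat.xor_comm]⟩
  loopless := by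
    constructor
    rintro u ⟨k, h⟩
    rw [Nat.xor_self] at h
    exact (pow_ne_zero k (two_ne_zero)) h.symm

noncomputable instance (n : ℕ) : DecidableRel (bricklayerGraph n).Adj :=
  Classical.decRel _

/-- `λ_n`: the principal (largest) eigenvalue of the adjacency matrix of `G_n` over ℝ. -/
noncomputable def bricklayerLambda (n : ℕ) : ℝ :=
  sSup (spectrum ℝ ((bricklayerGraph n).adjMatrix ℝ))

/-!
`G_{2^d-1}` is the cube `Q_d` with the vertex `2^d - 1` deleted. Since `d - 3/2^d < log₂ (2^d - 2)`,
by the Collatz–Wielandt bound it suffices to exhibit a positive vector `x` with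
`A x ≤ (d - 3/2^d) x`. We take `x` constant on Hamming levels, `x = 1 - δ U(w)` on weight `w < d`
with `δ = 3/2^d` and `U(w) = ∑_{v<w} g(v)`, where `g(v)` is the size of the Hamming ball of
radius `v` per edge leaving it. The recurrence `(d - w) g(w) = w g(w-1) + 1` makes the first-order
terms cancel on every level below `d - 1`; the top level, which lost its neighbour `2^d - 1`, is
checked by explicit estimates.
-/

open Finset Matrix

theorem Matrix.abs_le_of_mem_spectrum_of_mulVec_le {n : Type*} [Fintype n] [DecidableEq n]
    {A : Matrix n n ℝ} (hA : ∀ i j, 0 ≤ A i j) {x : n → ℝ} (hx : ∀ i, 0 < x i) {t : ℝ}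
    (h : ∀ i, (A *ᵥ x) i ≤ t * x i) {μ : ℝ} (hμ : μ ∈ spectrum ℝ A) : |μ| ≤ t := by
  rw [← spectrum_toLin', ← Module.End.hasEigenvalue_iff_mem_spectrum] at hμ
  obtain ⟨v, hv⟩ := hμ.exists_hasEigenvector
  have hAv : A *ᵥ v = μ • v := by simpa using hv.apply_eq_smul
  obtain ⟨j, hj⟩ : ∃ j, v j ≠ 0 := Function.ne_iff.mp hv.2
  obtain ⟨i, -, hi⟩ := exists_max_image univ (fun k => |v k| / x k) ⟨j, mem_univ j⟩
  set m := |v i| / x i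
  have hvm : ∀ k, |v k| ≤ m * x k := fun k =>
    (div_le_iff₀ (hx k)).mp (hi k (mem_univ k))
  have hvi : |v i| = m * x i := (div_mul_cancel₀ _ (hx i).ne').symm
  have hm : 0 < m := (div_pos (abs_pos.mpr hj) (hx j)).trans_le (hi j (mem_univ j))
  have key : |μ| * |v i| ≤ t * |v i| :=
    calc |μ| * |v i| = |(A *ᵥ v) i| := by rw [hAv, Pi.smul_apply, smul_eq_mul, abs_mul]
      _ ≤ ∑ k, A i k * |v k| := by
        simp only [mulVec, dotProduct]
        refine (abs_sum_le_sum_abs _ _).trans_eq (sum_congr rfl fun k _ => ?_)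
        rw [abs_mul, abs_of_nonneg (hA i k)]
      _ ≤ ∑ k, A i k * (m * x k) := by gcongr with k; exact hA i k; exact hvm k
      _ = m * (A *ᵥ x) i := by
        simp only [mulVec, dotProduct, mul_sum]; exact sum_congr rfl fun k _ => by ring
      _ ≤ m * (t * x i) := by gcongr; exact h i
      _ = t * |v i| := by rw [hvi]; ring
  exact le_of_mul_le_mul_right key (hvi ▸ mul_pos hm (hx i))

lemma bricklayerGraph_adjMatrix_mulVec_le {n d : ℕ} (hn : n ≤ 2 ^ d) {f : ℕ → ℝ}
    (hf : ∀ m, 0 ≤ f m) (u : Fin n) :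
    ((bricklayerGraph n).adjMatrix ℝ *ᵥ fun v => f v) u ≤ ∑ k ∈ range d, f (u ^^^ 2 ^ k) := by
  have hinj : Set.InjOn (fun k => (u : ℕ) ^^^ 2 ^ k) (range d) := fun a _ b _ hab =>
    Nat.pow_right_injective le_rfl (Nat.xor_right_injective hab)
  have hsub : ((bricklayerGraph n).neighborFinset u).map Fin.valEmbedding ⊆
      (range d).image fun k => (u : ℕ) ^^^ 2 ^ k := by
    intro m hm
    obtain ⟨v, hv, rfl⟩ := mem_map.mp hm
    obtain ⟨k, hk⟩ := (SimpleGraph.mem_neighborFinset _ _ _).mp hv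
    have hkd : 2 ^ k < 2 ^ d :=
      hk ▸ Nat.xor_lt_two_pow (u.2.trans_le hn) (v.2.trans_le hn)
    refine mem_image.mpr ⟨k, mem_range.mpr (Nat.pow_lt_pow_iff_right one_lt_two |>.mp hkd), ?_⟩
    simp [← hk]
  rw [SimpleGraph.adjMatrix_mulVec_apply, ← sum_image hinj]
  exact (sum_map _ _ (fun m => f m)).symm.trans_le
    (sum_le_sum_of_subset_of_nonneg hsub fun m _ _ => hf m)

def bitWeight (d u : ℕ) : ℕ := #{k ∈ range d | u.testBit k}

lemma bitWeight_le (d u : ℕ) : bitWeight d u ≤ d :=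
  (card_filter_le _ _).trans_eq (card_range d)

lemma bitWeight_lt_of_lt_two_pow_sub_one {d u : ℕ} (hu : u < 2 ^ d - 1) : bitWeight d u < d := by
  refine (bitWeight_le d u).lt_of_ne fun hw => hu.ne ?_
  have hbits : ∀ k < d, u.testBit k := fun k hk =>
    (filter_eq_self.mp (eq_of_subset_of_card_le (filter_subset _ _)
      ((card_range d).trans hw.symm).le) k (mem_range.mpr hk))
  refine Nat.eq_of_testBit_eq fun k => ?_
  rw [Nat.testBit_two_pow_sub_one]
  by_cases hk : k < d
  · simp [hk, hbits k hk]
  · simp [hk, Nat.testBit_lt_two_pow ((hu.trans_le (Nat.sub_le _ _)).trans_le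
      (Nat.pow_le_pow_right two_pos (not_lt.mp hk)))]

lemma bitWeight_xor_two_pow_of_testBit {d u k : ℕ} (hk : k < d) (hb : u.testBit k) :
    bitWeight d (u ^^^ 2 ^ k) + 1 = bitWeight d u := by
  have hbits : {j ∈ range d | (u ^^^ 2 ^ k).testBit j} = {j ∈ range d | u.testBit j}.erase k := by
    ext j
    obtain rfl | hj := eq_or_ne j k
    · simp [Nat.testBit_xor, hb]
    · simp [Nat.testBit_xor, Nat.testBit_two_pow, hj, hj.symm]
  rw [bitWeight, hbits, card_erase_add_one (by simp [hk, hb]), bitWeight]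

lemma bitWeight_xor_two_pow_of_not_testBit {d u k : ℕ} (hk : k < d) (hb : ¬u.testBit k) :
    bitWeight d (u ^^^ 2 ^ k) = bitWeight d u + 1 := by
  have hbits : {j ∈ range d | (u ^^^ 2 ^ k).testBit j} = insert k {j ∈ range d | u.testBit j} := by
    ext j
    obtain rfl | hj := eq_or_ne j k
    · simp [Nat.testBit_xor, hk, hb]
    · simp [Nat.testBit_xor, Nat.testBit_two_pow, hj, hj.symm]
  rw [bitWeight, hbits, card_insert_of_notMem (by simp [hb]), bitWeight]

lemma sum_range_bitWeight_xor_two_pow (d u : ℕ) (F : ℕ → ℝ) :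
    ∑ k ∈ range d, F (bitWeight d (u ^^^ 2 ^ k)) =
      bitWeight d u * F (bitWeight d u - 1) + (d - bitWeight d u : ℕ) * F (bitWeight d u + 1) := by
  have hcard : #{k ∈ range d | ¬u.testBit k} = d - bitWeight d u := by
    rw [filter_not, card_sdiff_of_subset (filter_subset _ _), card_range, bitWeight]
  rw [← sum_filter_add_sum_filter_not _ (u.testBit ·)]
  have hset : ∀ k ∈ {k ∈ range d | u.testBit k},
      F (bitWeight d (u ^^^ 2 ^ k)) = F (bitWeight d u - 1) := fun k hk => by
    rw [mem_filter, mem_range] at hk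
    rw [← bitWeight_xor_two_pow_of_testBit hk.1 hk.2, Nat.add_sub_cancel]
  have hunset : ∀ k ∈ {k ∈ range d | ¬u.testBit k},
      F (bitWeight d (u ^^^ 2 ^ k)) = F (bitWeight d u + 1) := fun k hk => by
    rw [mem_filter, mem_range] at hk
    rw [bitWeight_xor_two_pow_of_not_testBit hk.1 hk.2]
  rw [sum_congr rfl hset, sum_congr rfl hunset, sum_const, sum_const, hcard, nsmul_eq_mul,
    nsmul_eq_mul, bitWeight]

lemma Nat.self_le_choose {m v : ℕ} (hv : 0 < v) (hvm : v < m) : m ≤ m.choose v := by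
  induction m generalizing v with
  | zero => omega
  | succ m ih =>
    obtain rfl | ⟨w, hw, rfl⟩ : v = 1 ∨ ∃ w, 0 < w ∧ v = w + 1 :=
      (Nat.lt_or_ge 1 v).elim (fun h => .inr ⟨v - 1, by omega, by omega⟩) (fun h => .inl (by omega))
    · simp
    · rw [Nat.choose_succ_succ']
      have := ih hw (by omega)
      have := Nat.choose_pos (n := m) (k := w + 1) (by omega)
      omega

-- Vertices of `Q_d` of weight `≤ v` per edge from weight `v` to weight `v + 1`.
noncomputable def ballRatio (d v : ℕ) : ℝ :=
  (∑ j ∈ range (v + 1), (d.choose j : ℝ)) / ((d - v) * d.choose v)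

noncomputable def ballRatioSum (d w : ℕ) : ℝ := ∑ v ∈ range w, ballRatio d v

lemma ballRatio_nonneg (d v : ℕ) : 0 ≤ ballRatio d v := by
  refine div_nonneg (by positivity) ?_
  rcases le_or_gt v d with h | h
  · exact mul_nonneg (sub_nonneg.mpr (by exact_mod_cast h)) (Nat.cast_nonneg _)
  · simp [Nat.choose_eq_zero_of_lt h]

lemma ballRatio_zero (d : ℕ) : ballRatio d 0 = 1 / d := by
  simp [ballRatio]

lemma ballRatio_rec {d w : ℕ} (hw : w < d) :
    ((d : ℝ) - w) * ballRatio d w = w * ballRatio d (w - 1) + 1 := by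
  rcases w with _ | v
  · have : (d : ℝ) ≠ 0 := by positivity
    simp [ballRatio_zero, this]
  · have hchoose : (d.choose (v + 1) : ℝ) * (v + 1) = d.choose v * ((d : ℝ) - v) := by
      have := Nat.choose_succ_right_eq d v
      rw [← Nat.cast_sub (by omega)]; exact_mod_cast this
    have h1 : (0 : ℝ) < d.choose (v + 1) := by exact_mod_cast Nat.choose_pos hw.le
    have h2 : (0 : ℝ) < d - (v + 1) := by
      have : ((v + 1 : ℕ) : ℝ) < d := by exact_mod_cast hw
      push_cast at this; linarith
    have h3 : (0 : ℝ) < d - v := by linarith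
    have h4 : (0 : ℝ) < d.choose v := by exact_mod_cast Nat.choose_pos (by omega : v ≤ d)
    simp only [ballRatio, sum_range_succ _ (v + 1), Nat.add_sub_cancel, Nat.cast_add, Nat.cast_one]
    field_simp
    linear_combination (-∑ j ∈ range (v + 1), (d.choose j : ℝ)) * hchoose

lemma ballRatio_le {d v : ℕ} (hv : 0 < v) (hvd : v + 2 ≤ d) :
    ballRatio d v ≤ 2 ^ d / (d * (d - 1)) := by
  have hnum : ∑ j ∈ range (v + 1), (d.choose j : ℝ) ≤ 2 ^ d := by
    calc ∑ j ∈ range (v + 1), (d.choose j : ℝ) ≤ ∑ j ∈ range (d + 1), (d.choose j : ℝ) :=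
          sum_le_sum_of_subset_of_nonneg (range_subset_range.mpr (by omega))
            fun _ _ _ => by positivity
      _ = 2 ^ d := by exact_mod_cast Nat.sum_range_choose d
  have hden : d * (d - 1) ≤ (d - v) * d.choose v := by
    obtain ⟨m, rfl⟩ : ∃ m, d = m + 1 := ⟨d - 1, by omega⟩
    rw [Nat.add_sub_cancel, mul_comm (m + 1 - v), ← Nat.choose_mul_succ_eq, mul_comm (m + 1)]
    exact Nat.mul_le_mul_right _ (Nat.self_le_choose (m := m) hv (by omega))
  have hden' : (d : ℝ) * (d - 1) ≤ (d - v) * d.choose v := by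
    rw [← Nat.cast_pred (by omega), ← Nat.cast_sub (by omega)]; exact_mod_cast hden
  have hpos : (0 : ℝ) < d * (d - 1) := by
    have : (2 : ℝ) ≤ d := by exact_mod_cast (by omega : 2 ≤ d)
    nlinarith
  exact div_le_div₀ (by positivity) hnum hpos hden'

lemma ballRatioSum_mono (d : ℕ) : Monotone (ballRatioSum d) :=
  monotone_nat_of_le_succ fun w => by
    simpa [ballRatioSum, sum_range_succ] using ballRatio_nonneg d w

lemma ballRatioSum_le {d w : ℕ} (hw : 0 < w) (hwd : w < d) :
    ballRatioSum d w ≤ 1 / d + (w - 1) * (2 ^ d / (d * (d - 1))) := by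
  induction w with
  | zero => omega
  | succ w ih =>
    rcases Nat.eq_zero_or_pos w with rfl | hw'
    · simp [ballRatioSum, ballRatio_zero]
    · rw [ballRatioSum, sum_range_succ, ← ballRatioSum]
      have := ih hw' (by omega)
      have := ballRatio_le hw' (by omega : w + 2 ≤ d)
      push_cast; linarith

lemma ballRatioSum_level {d w : ℕ} (δ : ℝ) (hw : w + 1 < d) :
    w * (1 - δ * ballRatioSum d (w - 1)) + (d - w : ℕ) * (1 - δ * ballRatioSum d (w + 1))
      ≤ (d - δ) * (1 - δ * ballRatioSum d w) := by
  have hsucc : ballRatioSum d (w + 1) = ballRatioSum d w + ballRatio d w := sum_range_succ _ _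
  have hpred : (w : ℝ) * ballRatioSum d (w - 1) = w * ballRatioSum d w - w * ballRatio d (w - 1) := by
    rcases w with _ | v
    · simp
    · simp [ballRatioSum, sum_range_succ]; ring
  have hrec := ballRatio_rec (d := d) (w := w) (by omega)
  have hU : 0 ≤ ballRatioSum d w := sum_nonneg fun v _ => ballRatio_nonneg d v
  rw [Nat.cast_sub (by omega), ← sub_nonneg]
  have key : (d - δ) * (1 - δ * ballRatioSum d w) - (w * (1 - δ * ballRatioSum d (w - 1)) +
      (d - w) * (1 - δ * ballRatioSum d (w + 1))) = δ ^ 2 * ballRatioSum d w := by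
    rw [hsucc]; linear_combination δ * hpred + δ * hrec
  rw [key]; positivity

lemma ballRatioSum_mul_lt_one {d : ℕ} (hd : 5 ≤ d) :
    3 / 2 ^ d * ballRatioSum d (d - 1) < 1 := by
  have hD : (5 : ℝ) ≤ d := by exact_mod_cast hd
  have hP : (d : ℝ) - 1 ≤ 2 ^ d := by
    have : (d : ℝ) < 2 ^ d := by exact_mod_cast Nat.lt_two_pow_self
    linarith
  have hU : ballRatioSum d (d - 1) ≤ 2 ^ d / d := by
    refine (ballRatioSum_le (by omega) (by omega)).trans ?_
    have hD1 : (d : ℝ) - 1 ≠ 0 := by linarith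
    rw [Nat.cast_sub (by omega), Nat.cast_one]
    calc 1 / (d : ℝ) + (d - 1 - 1) * (2 ^ d / (d * (d - 1)))
        = (d - 1 + (d - 2) * 2 ^ d) / (d * (d - 1)) := by field_simp; ring
      _ ≤ ((d - 1) * 2 ^ d) / (d * (d - 1)) := by gcongr ?_ / _ <;> nlinarith
      _ = 2 ^ d / d := by field_simp
  calc 3 / 2 ^ d * ballRatioSum d (d - 1) ≤ 3 / 2 ^ d * (2 ^ d / d) := by gcongr
    _ = 3 / d := by field_simp
    _ < 1 := by rw [div_lt_one (by positivity)]; linarith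

lemma ballRatioSum_top_level {d : ℕ} (hd : 5 ≤ d) :
    ((d : ℝ) - 1) * (1 - 3 / 2 ^ d * ballRatioSum d (d - 2))
      ≤ (d - 3 / 2 ^ d) * (1 - 3 / 2 ^ d * ballRatioSum d (d - 1)) := by
  -- the estimates below need `d ≥ 6`
  obtain rfl | hd6 := hd.eq_or_lt
  · norm_num [ballRatioSum, ballRatio, sum_range_succ, Nat.choose]
  have hD : (6 : ℝ) ≤ d := by exact_mod_cast hd6
  have hD1 : (d : ℝ) - 1 ≠ 0 := by linarith
  have hE : (0 : ℝ) < d * (d - 1) := by nlinarith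
  have hP : (64 : ℝ) ≤ 2 ^ d := by
    calc (64 : ℝ) = 2 ^ 6 := by norm_num
      _ ≤ 2 ^ d := pow_le_pow_right₀ one_le_two hd6
  set δ : ℝ := 3 / 2 ^ d with hδ
  have hδ0 : 0 ≤ δ := by positivity
  have hδ1 : δ ≤ 3 / 64 := by rw [hδ]; gcongr
  have hsplit : ballRatioSum d (d - 1) = ballRatioSum d (d - 2) + ballRatio d (d - 2) := by
    rw [show d - 1 = d - 2 + 1 by omega]; exact sum_range_succ _ _
  have hα : δ * ballRatioSum d (d - 2) * (d * (d - 1)) ≤ δ * (d - 1) + 3 * (d - 3) := by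
    have hU := ballRatioSum_le (d := d) (w := d - 2) (by omega) (by omega)
    rw [Nat.cast_sub (by omega)] at hU
    calc δ * ballRatioSum d (d - 2) * (d * (d - 1))
        ≤ δ * (1 / d + (d - 2 - 1) * (2 ^ d / (d * (d - 1)))) * (d * (d - 1)) := by
          gcongr; exact_mod_cast hU
      _ = δ * (d - 1) + 3 * (d - 3) := by rw [hδ]; field_simp; ring
  have hβ : δ * ballRatio d (d - 2) * (d * (d - 1)) ≤ 3 := by
    have hg := ballRatio_le (d := d) (v := d - 2) (by omega) (by omega)
    calc δ * ballRatio d (d - 2) * (d * (d - 1))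
        ≤ δ * (2 ^ d / (d * (d - 1))) * (d * (d - 1)) := by gcongr
      _ = 3 := by rw [hδ]; field_simp
  have hpoly : 3 * (d - δ) ≤ (1 - δ) * (d * (d - 1) - δ * (d - 1) - 3 * (d - 3)) := by
    nlinarith [mul_nonneg (sub_nonneg.mpr hD) (sub_nonneg.mpr hδ1)]
  rw [hsplit, ← sub_nonneg]
  refine nonneg_of_mul_nonneg_left ?_ hE
  nlinarith [mul_le_mul_of_nonneg_left hα (by linarith : (0 : ℝ) ≤ 1 - δ),
    mul_le_mul_of_nonneg_left hβ (by linarith : (0 : ℝ) ≤ d - δ)]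

-- Level `d` is the deleted vertex `2^d - 1`; the value `0` there lets neighbour sums run over
-- the whole cube.
noncomputable def levelProfile (d w : ℕ) : ℝ :=
  if w < d then 1 - 3 / 2 ^ d * ballRatioSum d w else 0

lemma levelProfile_pos {d w : ℕ} (hd : 5 ≤ d) (hw : w < d) : 0 < levelProfile d w := by
  have hmono : 3 / 2 ^ d * ballRatioSum d w ≤ 3 / 2 ^ d * ballRatioSum d (d - 1) := by
    gcongr; exact ballRatioSum_mono d (by omega)
  rw [levelProfile, if_pos hw]
  linarith [ballRatioSum_mul_lt_one hd]

lemma levelProfile_nonneg {d : ℕ} (hd : 5 ≤ d) (w : ℕ) : 0 ≤ levelProfile d w := by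
  by_cases hw : w < d
  · exact (levelProfile_pos hd hw).le
  · simp [levelProfile, hw]

lemma levelProfile_level {d w : ℕ} (hd : 5 ≤ d) (hw : w < d) :
    w * levelProfile d (w - 1) + (d - w : ℕ) * levelProfile d (w + 1)
      ≤ (d - 3 / 2 ^ d) * levelProfile d w := by
  by_cases hw1 : w + 1 < d
  · simp only [levelProfile, if_pos hw, if_pos hw1, if_pos (by omega : w - 1 < d)]
    exact ballRatioSum_level _ hw1
  · obtain rfl : w = d - 1 := by omega
    simp only [levelProfile, if_pos hw, if_neg (by omega : ¬d - 1 + 1 < d), mul_zero, add_zero,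
      Nat.cast_sub (by omega : 1 ≤ d), Nat.cast_one, show d - 1 - 1 = d - 2 by omega,
      if_pos (by omega : d - 2 < d)]
    exact ballRatioSum_top_level hd

lemma sub_lt_logb_two_pow_sub_two {d : ℕ} (hd : 5 ≤ d) :
    (d : ℝ) - 3 / 2 ^ d < Real.logb 2 (2 ^ d - 2) := by
  have hP : (32 : ℝ) ≤ 2 ^ d := by
    calc (32 : ℝ) = 2 ^ 5 := by norm_num
      _ ≤ 2 ^ d := pow_le_pow_right₀ one_le_two hd
  rw [Real.lt_logb_iff_rpow_lt one_lt_two (by linarith), Real.rpow_sub two_pos,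
    Real.rpow_natCast, div_lt_iff₀ (by positivity), Real.rpow_def_of_pos two_pos]
  set x := Real.log 2 * (3 / 2 ^ d) with hx
  have hx0 : 0 ≤ x := by positivity
  have hxP : x * 2 ^ d = 3 * Real.log 2 := by rw [hx]; field_simp
  -- at `d = 5` the linear bound `exp x ≥ 1 + x` is too weak
  have hexp := Real.quadratic_le_exp_of_nonneg hx0
  nlinarith [Real.log_two_gt_d9, Real.log_two_lt_d9]

/-- For every integer `d ≥ 5`, `λ_{2^d - 1} < log₂ (2^d - 2)`. -/
theorem bricklayer_lambda_pow_sub_one_lt (d : ℕ) (hd : 5 ≤ d) :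
    bricklayerLambda (2 ^ d - 1) < Real.logb 2 ((2 : ℝ) ^ d - 2) := by
  have hweight (u : Fin (2 ^ d - 1)) : bitWeight d u < d := bitWeight_lt_of_lt_two_pow_sub_one u.2
  set x : Fin (2 ^ d - 1) → ℝ := fun u => levelProfile d (bitWeight d u)
  have hx (u) : 0 < x u := levelProfile_pos hd (hweight u)
  have hAx (u) : ((bricklayerGraph _).adjMatrix ℝ *ᵥ x) u ≤ (d - 3 / 2 ^ d) * x u :=
    calc _ ≤ ∑ k ∈ range d, levelProfile d (bitWeight d (u ^^^ 2 ^ k)) :=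
          bricklayerGraph_adjMatrix_mulVec_le (Nat.sub_le _ _)
            (fun _ => levelProfile_nonneg hd _) u
      _ = _ := sum_range_bitWeight_xor_two_pow d u _
      _ ≤ _ := levelProfile_level hd (hweight u)
  have hA (u v) : 0 ≤ (bricklayerGraph (2 ^ d - 1)).adjMatrix ℝ u v := by
    rw [SimpleGraph.adjMatrix_apply]; split_ifs <;> norm_num
  have ht : 0 ≤ (d : ℝ) - 3 / 2 ^ d := by
    have : (3 : ℝ) / 2 ^ d ≤ 3 := div_le_self (by norm_num) (one_le_pow₀ one_le_two)
    have : (5 : ℝ) ≤ d := by exact_mod_cast hd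
    linarith
  calc bricklayerLambda (2 ^ d - 1) ≤ d - 3 / 2 ^ d :=
        Real.sSup_le (fun μ hμ => (le_abs_self μ).trans
          (abs_le_of_mem_spectrum_of_mulVec_le hA hx hAx hμ)) ht
    _ < _ := sub_lt_logb_two_pow_sub_two hd
end

section
/- For every integer d ≥ 3, λ_{2^d+1} < log₂(2^d + 1/2). -/
/-!
`G_{2^d+1}` is the cube `Q_d` on `0, …, 2^d - 1` together with a pendant vertex `2^d` attached
to `0`. By the Collatz–Wielandt argument, `λ ≤ r` as soon as a positive vector `w` satisfies
`A w ≤ r w`; we take `r = d + ε` with `ε = 2^{-(d+1)}`. A cube vertex of Hamming weight `ℓ` gets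
weight `W ℓ = 1 + ε ∑_{ℓ ≤ j < d} g_j`, where `g_j = ∑_{i > j} C(d,i) / (d C(d-1,j))` solves
`(j+1) g_j = (d-j-1) g_{j+1} + 1`: this makes the excess `(A w - d w)_v` exactly `ε ≤ ε W ℓ` at
every cube vertex `v ≠ 0`. The pendant vertex gets `W 0 / r`, and `d g_0 = 2^d - 1` leaves room
for it at `0` once `d ≥ 3`. Finally Bernoulli's inequality `2^ε < 1 + ε` gives
`d + ε < log₂ (2^d (1 + ε)) = log₂ (2^d + 1/2)`.
-/

open Finset

namespace Matrix

variable {n : Type*} [Fintype n] {A : Matrix n n ℝ} {w : n → ℝ} {r : ℝ}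

theorem le_of_mulVec_eq_smul_of_mulVec_le (hA : ∀ i j, 0 ≤ A i j) (hw : ∀ i, 0 < w i)
    (hAw : ∀ i, (A *ᵥ w) i ≤ r * w i) {μ : ℝ} {x : n → ℝ} (hx : A *ᵥ x = μ • x)
    (hx_pos : ∃ i, 0 < x i) : μ ≤ r := by
  obtain ⟨i, hi⟩ := hx_pos
  obtain ⟨i₀, -, hmax⟩ := exists_max_image univ (fun j => x j / w j) ⟨i, mem_univ i⟩
  set c := x i₀ / w i₀
  have hc : 0 < c := (div_pos hi (hw i)).trans_le (hmax i (mem_univ i))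
  have hx_le : ∀ j, x j ≤ c * w j := fun j => (div_le_iff₀ (hw j)).mp (hmax j (mem_univ j))
  have hxi₀ : x i₀ = c * w i₀ := (div_mul_cancel₀ _ (hw i₀).ne').symm
  have hμx : μ * x i₀ ≤ r * x i₀ :=
    calc μ * x i₀ = ∑ j, A i₀ j * x j := by rw [← smul_eq_mul, ← Pi.smul_apply, ← hx]; rfl
      _ ≤ ∑ j, A i₀ j * (c * w j) :=
        sum_le_sum fun j _ => mul_le_mul_of_nonneg_left (hx_le j) (hA i₀ j)
      _ = c * (A *ᵥ w) i₀ := by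
          rw [mulVec, dotProduct, mul_sum]; exact sum_congr rfl fun j _ => by ring
      _ ≤ c * (r * w i₀) := mul_le_mul_of_nonneg_left (hAw i₀) hc.le
      _ = r * x i₀ := by rw [hxi₀]; ring
  exact le_of_mul_le_mul_right hμx (hxi₀ ▸ mul_pos hc (hw i₀))

theorem le_of_mem_spectrum_of_mulVec_le [DecidableEq n] (hA : ∀ i j, 0 ≤ A i j)
    (hw : ∀ i, 0 < w i) (hAw : ∀ i, (A *ᵥ w) i ≤ r * w i) {μ : ℝ} (hμ : μ ∈ spectrum ℝ A) :
    μ ≤ r := by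
  rw [← spectrum_toLin'] at hμ
  obtain ⟨x, hx⟩ := (Module.End.hasEigenvalue_iff_mem_spectrum.mpr hμ).exists_hasEigenvector
  have hAx : A *ᵥ x = μ • x := by rw [← toLin'_apply, hx.apply_eq_smul]
  obtain ⟨i, hi⟩ := Function.ne_iff.mp hx.2
  rcases lt_or_gt_of_ne hi with hneg | hpos
  · exact le_of_mulVec_eq_smul_of_mulVec_le hA hw hAw (x := -x)
      (by rw [mulVec_neg, hAx, smul_neg]) ⟨i, neg_pos.mpr hneg⟩
  · exact le_of_mulVec_eq_smul_of_mulVec_le hA hw hAw hAx ⟨i, hpos⟩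

end Matrix

theorem SimpleGraph.sSup_spectrum_adjMatrix_le {V : Type*} [Fintype V] [DecidableEq V]
    (G : SimpleGraph V) [DecidableRel G.Adj] {w : V → ℝ} (hw : ∀ v, 0 < w v) {r : ℝ}
    (hr : 0 ≤ r) (hGw : ∀ v, ∑ u ∈ G.neighborFinset v, w u ≤ r * w v) :
    sSup (spectrum ℝ (G.adjMatrix ℝ)) ≤ r := by
  refine Real.sSup_le (fun μ hμ => Matrix.le_of_mem_spectrum_of_mulVec_le ?_ hw ?_ hμ) hr
  · intro u v
    rw [SimpleGraph.adjMatrix_apply]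
    split_ifs <;> norm_num
  · intro v
    rw [SimpleGraph.adjMatrix_mulVec_apply]
    exact hGw v

theorem Nat.xor_two_pow_of_lt {x k : ℕ} (hx : x < 2 ^ k) : x ^^^ 2 ^ k = x + 2 ^ k := by
  have hmod : (x ^^^ 2 ^ k) % 2 ^ k = x := by
    rw [Nat.xor_mod_two_pow, Nat.mod_self, Nat.xor_zero, Nat.mod_eq_of_lt hx]
  have hdiv : (x ^^^ 2 ^ k) / 2 ^ k = 1 := by
    rw [Nat.xor_div_two_pow, Nat.div_eq_of_lt hx, Nat.div_self (by positivity), Nat.zero_xor]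
  have := Nat.mod_add_div (x ^^^ 2 ^ k) (2 ^ k)
  rw [hmod, hdiv, mul_one] at this
  exact this.symm

theorem sum_neighborFinset_bricklayerGraph {n m : ℕ} (hn : n ≤ 2 ^ m) (v : Fin n)
    (f : ℕ → ℝ) :
    ∑ u ∈ (bricklayerGraph n).neighborFinset v, f u =
      ∑ k ∈ range m with v.val ^^^ 2 ^ k < n, f (v.val ^^^ 2 ^ k) := by
  symm
  refine sum_bij (fun k hk => ⟨v.val ^^^ 2 ^ k, (mem_filter.mp hk).2⟩) ?_ ?_ ?_ (fun _ _ => rfl)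
  · intro k _
    rw [SimpleGraph.mem_neighborFinset]
    exact ⟨k, xor_cancel_left _ _⟩
  · intro k _ l _ h
    have h' := congrArg (v.val ^^^ ·) (Fin.val_eq_of_eq h)
    simp only [xor_cancel_left] at h'
    exact Nat.pow_right_injective le_rfl h'
  · rintro u hu
    obtain ⟨k, hk⟩ := (SimpleGraph.mem_neighborFinset _ _ _).mp hu
    have hu_eq : u.val = v.val ^^^ 2 ^ k := by rw [← hk, xor_cancel_left]
    have hk_lt : k < m := by
      have := Nat.xor_lt_two_pow (v.isLt.trans_le hn) (u.isLt.trans_le hn)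
      rw [hk] at this
      exact (Nat.pow_lt_pow_iff_right (by norm_num)).mp this
    exact ⟨k, mem_filter.mpr ⟨mem_range.mpr hk_lt, hu_eq ▸ u.isLt⟩, Fin.ext hu_eq.symm⟩

theorem sum_neighborFinset_bricklayerGraph_of_lt {d : ℕ} {v : Fin (2 ^ d + 1)}
    (hv : v.val < 2 ^ d) (f : ℕ → ℝ) :
    ∑ u ∈ (bricklayerGraph (2 ^ d + 1)).neighborFinset v, f u =
      ∑ k ∈ range d, f (v.val ^^^ 2 ^ k) + if v.val = 0 then f (2 ^ d) else 0 := by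
  rw [sum_neighborFinset_bricklayerGraph (n := 2 ^ d + 1) (m := d + 1)
      (Nat.pow_lt_pow_succ one_lt_two),
    range_add_one, filter_insert, Nat.xor_two_pow_of_lt hv,
    filter_true_of_mem fun k hk => (Nat.xor_lt_two_pow hv
      (Nat.pow_lt_pow_right (by norm_num) (mem_range.mp hk))).trans (Nat.lt_succ_self _)]
  by_cases h0 : v.val = 0
  · rw [if_pos (by omega), sum_insert (by simp), if_pos h0, add_comm, h0, Nat.zero_xor]
  · rw [if_neg (by omega), if_neg h0, add_zero]

theorem sum_neighborFinset_bricklayerGraph_two_pow {d : ℕ} {v : Fin (2 ^ d + 1)}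
    (hv : v.val = 2 ^ d) (f : ℕ → ℝ) :
    ∑ u ∈ (bricklayerGraph (2 ^ d + 1)).neighborFinset v, f u = f 0 := by
  rw [sum_neighborFinset_bricklayerGraph (n := 2 ^ d + 1) (m := d + 1)
      (Nat.pow_lt_pow_succ one_lt_two),
    range_add_one, filter_insert, hv, Nat.xor_self, if_pos (Nat.zero_lt_succ _),
    filter_false_of_mem fun k hk => ?_, insert_empty, sum_singleton, Nat.xor_self]
  rw [Nat.xor_comm, Nat.xor_two_pow_of_lt (Nat.pow_lt_pow_right (by norm_num) (mem_range.mp hk))]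
  have : 0 < 2 ^ k := by positivity
  omega

def popcountBelow (d x : ℕ) : ℕ := #{k ∈ range d | x.testBit k}

theorem popcountBelow_zero (d : ℕ) : popcountBelow d 0 = 0 := by
  simp [popcountBelow]

theorem popcountBelow_le (d x : ℕ) : popcountBelow d x ≤ d :=
  (card_filter_le _ _).trans_eq (card_range d)

theorem popcountBelow_pos {d x : ℕ} (hx : x < 2 ^ d) (hx₀ : x ≠ 0) : 0 < popcountBelow d x := by
  refine card_pos.mpr ?_
  by_contra! h
  refine hx₀ (Nat.eq_of_testBit_eq fun k => ?_)
  rw [Nat.zero_testBit]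
  rcases lt_or_ge k d with hk | hk
  · simpa using filter_eq_empty_iff.mp h (mem_range.mpr hk)
  · exact Nat.testBit_lt_two_pow (hx.trans_le (Nat.pow_le_pow_right two_pos hk))

theorem popcountBelow_xor_two_pow_of_testBit {d x k : ℕ} (hk : k < d) (hb : x.testBit k) :
    popcountBelow d (x ^^^ 2 ^ k) = popcountBelow d x - 1 := by
  have hset : {j ∈ range d | (x ^^^ 2 ^ k).testBit j} = {j ∈ range d | x.testBit j}.erase k := by
    ext j
    rcases eq_or_ne j k with rfl | hj
    · simp [hb]
    · simp [Nat.testBit_two_pow, hj, hj.symm]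
  rw [popcountBelow, hset, card_erase_of_mem (by simp [hk, hb]), popcountBelow]

theorem popcountBelow_xor_two_pow_of_not_testBit {d x k : ℕ} (hk : k < d) (hb : ¬x.testBit k) :
    popcountBelow d (x ^^^ 2 ^ k) = popcountBelow d x + 1 := by
  have hset : {j ∈ range d | (x ^^^ 2 ^ k).testBit j} = insert k {j ∈ range d | x.testBit j} := by
    ext j
    rcases eq_or_ne j k with rfl | hj
    · simp [hb, hk]
    · simp [Nat.testBit_two_pow, hj, hj.symm]
  rw [popcountBelow, hset, card_insert_of_notMem (by simp [hb]), popcountBelow]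

theorem sum_popcountBelow_xor_two_pow (d x : ℕ) (g : ℕ → ℝ) :
    ∑ k ∈ range d, g (popcountBelow d (x ^^^ 2 ^ k)) =
      popcountBelow d x * g (popcountBelow d x - 1) +
        (d - popcountBelow d x) * g (popcountBelow d x + 1) := by
  have hset : ∑ k ∈ range d with x.testBit k, g (popcountBelow d (x ^^^ 2 ^ k)) =
      ∑ k ∈ range d with x.testBit k, g (popcountBelow d x - 1) :=
    sum_congr rfl fun k hk => by
      rw [mem_filter, mem_range] at hk
      rw [popcountBelow_xor_two_pow_of_testBit hk.1 hk.2]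
  have hunset : ∑ k ∈ range d with ¬x.testBit k, g (popcountBelow d (x ^^^ 2 ^ k)) =
      ∑ k ∈ range d with ¬x.testBit k, g (popcountBelow d x + 1) :=
    sum_congr rfl fun k hk => by
      rw [mem_filter, mem_range] at hk
      rw [popcountBelow_xor_two_pow_of_not_testBit hk.1 hk.2]
  have hcard : (#{k ∈ range d | ¬x.testBit k} : ℝ) = d - popcountBelow d x := by
    have := card_filter_add_card_filter_not (s := range d) (fun k => x.testBit k)
    rw [card_range] at this
    rw [popcountBelow, eq_sub_iff_add_eq, add_comm]
    exact_mod_cast this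
  rw [← sum_filter_add_sum_filter_not _ (fun k => x.testBit k), hset, hunset, sum_const, sum_const,
    nsmul_eq_mul, nsmul_eq_mul, hcard, popcountBelow]

def upperBinomialSum (d j : ℕ) : ℕ := ∑ i ∈ Ico (j + 1) (d + 1), d.choose i

theorem upperBinomialSum_le_two_pow (d j : ℕ) : upperBinomialSum d j ≤ 2 ^ d :=
  (sum_le_sum_of_subset (Ico_subset_Ico_left (Nat.zero_le _))).trans_eq
    (by rw [← range_eq_Ico, Nat.sum_range_choose])

theorem upperBinomialSum_eq_zero {d j : ℕ} (hj : d ≤ j) : upperBinomialSum d j = 0 := by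
  rw [upperBinomialSum, Ico_eq_empty (by omega), sum_empty]

theorem upperBinomialSum_eq_choose_add {d j : ℕ} (hj : j < d) :
    upperBinomialSum d j = d.choose (j + 1) + upperBinomialSum d (j + 1) :=
  sum_eq_sum_Ico_succ_bot (by omega) _

theorem upperBinomialSum_zero_add_one (d : ℕ) : upperBinomialSum d 0 + 1 = 2 ^ d := by
  rw [← Nat.sum_range_choose, range_eq_Ico, sum_eq_sum_Ico_succ_bot (Nat.succ_pos d),
    Nat.choose_zero_right, add_comm, upperBinomialSum]

noncomputable def levelGap (d j : ℕ) : ℝ := upperBinomialSum d j / (d * (d - 1).choose j)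

noncomputable def levelWeight (ε : ℝ) (d ℓ : ℕ) : ℝ := 1 + ε * ∑ j ∈ Ico ℓ d, levelGap d j

theorem levelGap_nonneg (d j : ℕ) : 0 ≤ levelGap d j := by
  unfold levelGap; positivity

theorem levelGap_le {d j : ℕ} (hj : j < d) : levelGap d j ≤ 2 ^ d / d := by
  have hC : (1 : ℝ) ≤ (d - 1).choose j := by exact_mod_cast Nat.choose_pos (by omega)
  have hS : (upperBinomialSum d j : ℝ) ≤ 2 ^ d := by exact_mod_cast upperBinomialSum_le_two_pow d j
  have hd : (0 : ℝ) < d := by exact_mod_cast (show 0 < d by omega)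
  rw [levelGap, div_le_div_iff₀ (mul_pos hd (one_pos.trans_le hC)) hd]
  calc (upperBinomialSum d j : ℝ) * d ≤ 2 ^ d * (d * 1) := by rw [mul_one]; gcongr
    _ ≤ 2 ^ d * (d * (d - 1).choose j) := by gcongr

theorem mul_levelGap_zero {d : ℕ} (hd : d ≠ 0) : d * levelGap d 0 = 2 ^ d - 1 := by
  have hS : (upperBinomialSum d 0 : ℝ) = 2 ^ d - 1 := by
    rw [eq_sub_iff_add_eq]; exact_mod_cast upperBinomialSum_zero_add_one d
  rw [levelGap, hS, Nat.choose_zero_right, Nat.cast_one, mul_one,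
    mul_div_cancel₀ _ (Nat.cast_ne_zero.mpr hd)]

theorem succ_mul_levelGap {d m : ℕ} (hm : m < d) :
    (m + 1) * levelGap d m = (d - (m + 1)) * levelGap d (m + 1) + 1 := by
  have hC : ((d - 1).choose m : ℝ) ≠ 0 := by exact_mod_cast (Nat.choose_pos (by omega)).ne'
  have hd : (d : ℝ) ≠ 0 := by exact_mod_cast (show d ≠ 0 by omega)
  have hpascal : (m + 1) * (d.choose (m + 1) : ℝ) = d * (d - 1).choose m := by
    have := Nat.add_one_mul_choose_eq (d - 1) m
    rw [Nat.sub_add_cancel (by omega : 1 ≤ d)] at this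
    rw [mul_comm]; exact_mod_cast this.symm
  have hS : (upperBinomialSum d m : ℝ) = d.choose (m + 1) + upperBinomialSum d (m + 1) := by
    exact_mod_cast upperBinomialSum_eq_choose_add hm
  have htail : (d - (m + 1)) * levelGap d (m + 1) =
      (m + 1) * upperBinomialSum d (m + 1) / (d * (d - 1).choose m) := by
    rcases (show m + 1 = d ∨ m + 1 < d by omega) with h | h
    · rw [upperBinomialSum_eq_zero h.ge, ← h]
      simp
    · have hC' : ((d - 1).choose (m + 1) : ℝ) ≠ 0 := by
        exact_mod_cast (Nat.choose_pos (by omega)).ne'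
      have hrow : ((d - 1).choose (m + 1) : ℝ) * (m + 1) = (d - 1).choose m * (d - (m + 1)) := by
        have := Nat.choose_succ_right_eq (d - 1) m
        rw [show d - 1 - m = d - (m + 1) by omega] at this
        have hcast : (d : ℝ) - (m + 1) = ((d - (m + 1) : ℕ) : ℝ) := by
          rw [Nat.cast_sub h.le]; push_cast; ring
        rw [hcast]
        exact_mod_cast this
      rw [levelGap]
      field_simp
      linear_combination -(upperBinomialSum d (m + 1) : ℝ) * hrow
  rw [htail, levelGap, hS]
  field_simp
  linear_combination hpascal

theorem levelWeight_eq_add (ε : ℝ) (d ℓ : ℕ) :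
    levelWeight ε d ℓ = levelWeight ε d (ℓ + 1) + ε * levelGap d ℓ := by
  rcases lt_or_ge ℓ d with h | h
  · rw [levelWeight, levelWeight, sum_eq_sum_Ico_succ_bot h]; ring
  · rw [levelWeight, levelWeight, Ico_eq_empty (by omega), Ico_eq_empty (by omega), levelGap,
      upperBinomialSum_eq_zero h]
    simp

theorem one_le_levelWeight {ε : ℝ} (hε : 0 ≤ ε) (d ℓ : ℕ) : 1 ≤ levelWeight ε d ℓ :=
  le_add_of_nonneg_right (mul_nonneg hε (sum_nonneg fun j _ => levelGap_nonneg d j))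

theorem levelWeight_le {ε : ℝ} {d : ℕ} (hε : 0 ≤ ε) (ℓ : ℕ) :
    levelWeight ε d ℓ ≤ 1 + ε * 2 ^ d := by
  rcases Nat.eq_zero_or_pos d with rfl | hd
  · simpa [levelWeight] using hε
  have hsum : ∑ j ∈ Ico ℓ d, levelGap d j ≤ 2 ^ d :=
    calc ∑ j ∈ Ico ℓ d, levelGap d j ≤ #(Ico ℓ d) • (2 ^ d / d : ℝ) :=
          sum_le_card_nsmul _ _ _ fun j hj => levelGap_le (mem_Ico.mp hj).2
      _ ≤ d * (2 ^ d / d : ℝ) := by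
          rw [nsmul_eq_mul]; gcongr; exact_mod_cast (Nat.card_Ico ℓ d).trans_le (Nat.sub_le d ℓ)
      _ = 2 ^ d := mul_div_cancel₀ _ (by positivity)
  unfold levelWeight
  gcongr

theorem levelWeight_neighbor_le {ε : ℝ} {d ℓ : ℕ} (hε : 0 ≤ ε) (hℓ₁ : 1 ≤ ℓ) (hℓd : ℓ ≤ d) :
    ℓ * levelWeight ε d (ℓ - 1) + (d - ℓ) * levelWeight ε d (ℓ + 1) ≤
      (d + ε) * levelWeight ε d ℓ := by
  obtain ⟨m, rfl⟩ : ∃ m, ℓ = m + 1 := ⟨ℓ - 1, by omega⟩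
  have hrec := succ_mul_levelGap (show m < d by omega)
  have hW := one_le_levelWeight hε d (m + 1)
  have hdown := levelWeight_eq_add ε d m
  have hup : levelWeight ε d (m + 1 + 1) = levelWeight ε d (m + 1) - ε * levelGap d (m + 1) := by
    rw [levelWeight_eq_add ε d (m + 1)]; ring
  rw [Nat.add_sub_cancel, hdown, hup]
  push_cast
  linear_combination ε * hrec + (by nlinarith : ε ≤ ε * levelWeight ε d (m + 1))

theorem mul_levelWeight_one_add_div_le {ε : ℝ} {d : ℕ} (hd : 3 ≤ d) (hε : ε * 2 ^ d = 1 / 2) :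
    d * levelWeight ε d 1 + levelWeight ε d 0 / (d + ε) ≤ (d + ε) * levelWeight ε d 0 := by
  have hε₀ : 0 < ε := pos_of_mul_pos_left (by rw [hε]; norm_num) (by positivity)
  have hd' : (3 : ℝ) ≤ d := by exact_mod_cast hd
  have hW₁ : 1 ≤ levelWeight ε d 0 := one_le_levelWeight hε₀.le d 0
  have hW₂ : levelWeight ε d 0 ≤ 3 / 2 := by linarith [levelWeight_le (d := d) hε₀.le 0]
  have hstep : d * levelWeight ε d 1 = d * levelWeight ε d 0 - (1 / 2 - ε) := by
    rw [levelWeight_eq_add ε d 0, mul_add, mul_left_comm, mul_levelGap_zero (by omega)]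
    linear_combination -hε
  have hpendant : levelWeight ε d 0 / (d + ε) ≤ 1 / 2 := by
    rw [div_le_iff₀ (by positivity)]; linarith
  rw [hstep]
  nlinarith

noncomputable def bricklayerTestVector (ε : ℝ) (d x : ℕ) : ℝ :=
  if x = 2 ^ d then levelWeight ε d 0 / (d + ε) else levelWeight ε d (popcountBelow d x)

section TestVector

variable {ε : ℝ} {d : ℕ}

theorem bricklayerTestVector_pos (hε : 0 < ε) (x : ℕ) : 0 < bricklayerTestVector ε d x := by
  have hW : ∀ ℓ, 0 < levelWeight ε d ℓ := fun ℓ => one_pos.trans_le (one_le_levelWeight hε.le d ℓ)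
  unfold bricklayerTestVector
  split_ifs
  · exact div_pos (hW 0) (by positivity)
  · exact hW _

theorem bricklayerTestVector_of_lt {x : ℕ} (hx : x < 2 ^ d) :
    bricklayerTestVector ε d x = levelWeight ε d (popcountBelow d x) :=
  if_neg hx.ne

theorem sum_neighborFinset_bricklayerTestVector_le (hd : 3 ≤ d) (hε : ε * 2 ^ d = 1 / 2)
    (v : Fin (2 ^ d + 1)) :
    ∑ u ∈ (bricklayerGraph (2 ^ d + 1)).neighborFinset v, bricklayerTestVector ε d u ≤
      (d + ε) * bricklayerTestVector ε d v := by
  have hε₀ : 0 < ε := pos_of_mul_pos_left (by rw [hε]; norm_num) (by positivity)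
  rcases (show v.val = 2 ^ d ∨ v.val < 2 ^ d by omega) with hv | hv
  · rw [sum_neighborFinset_bricklayerGraph_two_pow hv, bricklayerTestVector_of_lt (by positivity),
      popcountBelow_zero, bricklayerTestVector, if_pos hv, mul_div_cancel₀ _ (by positivity)]
  rw [sum_neighborFinset_bricklayerGraph_of_lt hv,
    sum_congr rfl fun k hk => bricklayerTestVector_of_lt
      (Nat.xor_lt_two_pow hv (Nat.pow_lt_pow_right one_lt_two (mem_range.mp hk))),
    sum_popcountBelow_xor_two_pow, bricklayerTestVector_of_lt hv]
  by_cases hv₀ : v.val = 0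
  · rw [if_pos hv₀, hv₀, popcountBelow_zero, bricklayerTestVector, if_pos rfl]
    simpa using mul_levelWeight_one_add_div_le hd hε
  · rw [if_neg hv₀, add_zero]
    exact levelWeight_neighbor_le hε₀.le (popcountBelow_pos hv hv₀) (popcountBelow_le d _)

end TestVector

theorem Real.lt_logb_two_one_add {x : ℝ} (hx₀ : 0 < x) (hx₁ : x < 1) : x < logb 2 (1 + x) := by
  have h := rpow_one_add_lt_one_add_mul_self (s := 1) (by norm_num) one_ne_zero hx₀ hx₁
  rw [one_add_one_eq_two, mul_one] at h
  calc x = logb 2 (2 ^ x) := (Real.logb_rpow two_pos (by norm_num)).symm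
    _ < logb 2 (1 + x) := Real.logb_lt_logb one_lt_two (by positivity) h

theorem add_inv_two_pow_succ_lt_logb (d : ℕ) :
    d + ((2 : ℝ) ^ (d + 1))⁻¹ < Real.logb 2 ((2 : ℝ) ^ d + 1 / 2) := by
  have hsplit : (2 : ℝ) ^ d + 1 / 2 = 2 ^ d * (1 + (2 ^ (d + 1))⁻¹) := by
    rw [pow_succ]; field_simp
  have hsmall : ((2 : ℝ) ^ (d + 1))⁻¹ < 1 :=
    inv_lt_one_of_one_lt₀ (one_lt_pow₀ one_lt_two (by omega))
  rw [hsplit, Real.logb_mul (by positivity) (by positivity), Real.logb_pow,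
    Real.logb_self_eq_one one_lt_two, mul_one]
  exact (add_lt_add_iff_left _).mpr (Real.lt_logb_two_one_add (by positivity) hsmall)

/-- For every integer `d ≥ 3`, `λ_{2^d + 1} < log₂ (2^d + 1/2)`. -/
theorem bricklayer_lambda_pow_add_one_lt (d : ℕ) (hd : 3 ≤ d) :
    bricklayerLambda (2 ^ d + 1) < Real.logb 2 ((2 : ℝ) ^ d + 1 / 2) := by
  have hε : ((2 : ℝ) ^ (d + 1))⁻¹ * 2 ^ d = 1 / 2 := by rw [pow_succ]; field_simp
  have hbound : bricklayerLambda (2 ^ d + 1) ≤ d + ((2 : ℝ) ^ (d + 1))⁻¹ :=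
    (bricklayerGraph (2 ^ d + 1)).sSup_spectrum_adjMatrix_le
      (bricklayerTestVector_pos (by positivity) ·) (by positivity)
      (sum_neighborFinset_bricklayerTestVector_le hd hε)
  exact hbound.trans_lt (add_inv_two_pow_succ_lt_logb d)
end

section
/- For every integer n ≥ 1, the bricklayer's graph G_{2n} is isomorphic to the Cartesian (box) product G_n □ K_2, and consequently λ_{2n} = λ_n + 1. -/
namespace Nat

theorem exists_eq_two_pow_iff_div_two (c : ℕ) :
    (∃ k, c = 2 ^ k) ↔ (∃ k, c / 2 = 2 ^ k) ∧ c % 2 = 0 ∨ c % 2 ≠ 0 ∧ c / 2 = 0 := by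
  constructor
  · rintro ⟨_ | k, rfl⟩
    · simp
    · exact Or.inl ⟨⟨k, by rw [pow_succ]; simp⟩, by simp [pow_succ]⟩
  · rintro (⟨⟨k, hk⟩, hc⟩ | ⟨hc, hk⟩)
    · exact ⟨k + 1, by rw [pow_succ]; omega⟩
    · exact ⟨0, by omega⟩

theorem exists_xor_eq_two_pow_iff (a b : ℕ) :
    (∃ k, a ^^^ b = 2 ^ k) ↔
      (∃ k, a / 2 ^^^ b / 2 = 2 ^ k) ∧ a % 2 = b % 2 ∨ a % 2 ≠ b % 2 ∧ a / 2 = b / 2 := by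
  have hmod : (a ^^^ b) % 2 = 0 ↔ a % 2 = b % 2 := by
    have := xor_mod_two_eq (m := a) (n := b)
    omega
  rw [exists_eq_two_pow_iff_div_two]
  simp only [xor_div_two, xor_eq_zero_iff, ne_eq, hmod]

end Nat

def bricklayerGraphDoubleIso (n : ℕ) :
    bricklayerGraph (2 * n) ≃g bricklayerGraph n □ (⊤ : SimpleGraph (Fin 2)) where
  toEquiv := (finCongr (Nat.mul_comm 2 n)).trans finProdFinEquiv.symm
  map_rel_iff' {u v} := by
    change _ ↔ ∃ k, (u : ℕ) ^^^ v = 2 ^ k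
    rw [Nat.exists_xor_eq_two_pow_iff]
    simp [bricklayerGraph, SimpleGraph.boxProd_adj, Fin.ext_iff]

open Matrix SimpleGraph

theorem IsGreatest.setOf_sub_mem_or_add_mem {α : Type*} [AddCommGroup α] [LinearOrder α]
    [IsOrderedAddMonoid α] {S : Set α} {m d : α} (h : IsGreatest S m) (hd : 0 ≤ d) :
    IsGreatest {μ | μ - d ∈ S ∨ μ + d ∈ S} (m + d) := by
  refine ⟨Or.inl (by simpa using h.1), ?_⟩
  rintro μ (hμ | hμ)
  · simpa using h.2 hμ
  · calc μ ≤ μ + (d + d) := le_add_of_nonneg_right (add_nonneg hd hd)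
      _ = μ + d + d := (add_assoc ..).symm
      _ ≤ m + d := by gcongr; exact h.2 hμ

theorem Matrix.mem_spectrum_iff_exists_mulVec_eq_smul {K n : Type*} [Field K] [Fintype n]
    [DecidableEq n] {A : Matrix n n K} {μ : K} :
    μ ∈ spectrum K A ↔ ∃ v ≠ 0, A *ᵥ v = μ • v := by
  rw [← Matrix.spectrum_toLin', ← Module.End.hasEigenvalue_iff_mem_spectrum,
    Module.End.hasEigenvalue_iff, Submodule.ne_bot_iff]
  simp [and_comm]

theorem SimpleGraph.Iso.spectrum_adjMatrix_eq {R V W : Type*} [CommRing R] [Fintype V]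
    [Fintype W] [DecidableEq V] [DecidableEq W] {G : SimpleGraph V} {H : SimpleGraph W}
    [DecidableRel G.Adj] [DecidableRel H.Adj] (e : G ≃g H) :
    spectrum R (H.adjMatrix R) = spectrum R (G.adjMatrix R) := by
  rw [← e.reindex_adjMatrix R]
  exact AlgEquiv.spectrum_eq (reindexAlgEquiv R R e.toEquiv) _

theorem SimpleGraph.nonempty_spectrum_adjMatrix {V : Type*} [Fintype V] [DecidableEq V]
    [Nonempty V] (G : SimpleGraph V) [DecidableRel G.Adj] :
    (spectrum ℝ (G.adjMatrix ℝ)).Nonempty :=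
  ⟨_, (G.isHermitian_adjMatrix ℝ).eigenvalues_mem_spectrum_real (Classical.arbitrary V)⟩

namespace SimpleGraph

local notation "K₂" => (⊤ : SimpleGraph (Fin 2))

variable {V : Type*} [Fintype V] [DecidableEq V] {G : SimpleGraph V} [DecidableRel G.Adj]
  [DecidableRel (G □ K₂).Adj]

theorem adjMatrix_boxProd_top_mulVec (v : V × Fin 2 → ℝ) (a : V) (i : Fin 2) :
    ((G □ K₂).adjMatrix ℝ *ᵥ v) (a, i) = (G.adjMatrix ℝ *ᵥ fun b ↦ v (b, i)) a + v (a, i.rev) := by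
  simp only [mulVec, dotProduct, Fintype.sum_prod_type, adjMatrix_apply, boxProd_adj, top_adj,
    Fin.sum_univ_two]
  fin_cases i <;> simp [Finset.sum_add_distrib, add_comm]

theorem add_mem_spectrum_adjMatrix_boxProd_top {x ε : ℝ} (hε : ε * ε = 1)
    (hx : x ∈ spectrum ℝ (G.adjMatrix ℝ)) : x + ε ∈ spectrum ℝ ((G □ K₂).adjMatrix ℝ) := by
  obtain ⟨w, hw0, hw⟩ := mem_spectrum_iff_exists_mulVec_eq_smul.mp hx
  refine mem_spectrum_iff_exists_mulVec_eq_smul.mpr ⟨fun p ↦ ![1, ε] p.2 * w p.1, ?_, ?_⟩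
  · intro h
    exact hw0 (funext fun a ↦ by simpa using congrFun h (a, 0))
  · funext ⟨a, i⟩
    rw [adjMatrix_boxProd_top_mulVec, show (fun b ↦ ![1, ε] i * w b) = ![1, ε] i • w from rfl,
      mulVec_smul, Pi.smul_apply, hw]
    fin_cases i <;>
      simp only [Fin.zero_eta, Fin.mk_one, Fin.reduceRev, cons_val_zero, cons_val_one,
        cons_val_fin_one, Pi.smul_apply, smul_eq_mul]
    · ring
    · linear_combination -w a * hε

theorem adjMatrix_mulVec_add_smul_of_boxProd_top {v : V × Fin 2 → ℝ} {μ ε : ℝ}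
    (hv : (G □ K₂).adjMatrix ℝ *ᵥ v = μ • v) (hε : ε * ε = 1) :
    G.adjMatrix ℝ *ᵥ (fun a ↦ v (a, 0) + ε * v (a, 1)) =
      (μ - ε) • fun a ↦ v (a, 0) + ε * v (a, 1) := by
  funext a
  have h0 := congrFun hv (a, 0)
  have h1 := congrFun hv (a, 1)
  rw [adjMatrix_boxProd_top_mulVec] at h0 h1
  simp only [Fin.reduceRev] at h0 h1
  rw [show (fun a ↦ v (a, 0) + ε * v (a, 1)) = (fun a ↦ v (a, 0)) + ε • fun a ↦ v (a, 1) from rfl,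
    mulVec_add, mulVec_smul]
  simp only [Pi.add_apply, Pi.smul_apply, smul_eq_mul] at h0 h1 ⊢
  linear_combination h0 + ε * h1 + v (a, 1) * hε

theorem mem_spectrum_adjMatrix_of_mem_spectrum_boxProd_top {μ : ℝ}
    (hμ : μ ∈ spectrum ℝ ((G □ K₂).adjMatrix ℝ)) :
    μ - 1 ∈ spectrum ℝ (G.adjMatrix ℝ) ∨ μ + 1 ∈ spectrum ℝ (G.adjMatrix ℝ) := by
  obtain ⟨v, hv0, hv⟩ := mem_spectrum_iff_exists_mulVec_eq_smul.mp hμ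
  have combination_eq_zero (ε : ℝ) (hε : ε * ε = 1) (hμε : μ - ε ∉ spectrum ℝ (G.adjMatrix ℝ))
      (a : V) : v (a, 0) + ε * v (a, 1) = 0 := by
    by_contra h
    exact hμε (mem_spectrum_iff_exists_mulVec_eq_smul.mpr
      ⟨_, fun h' ↦ h (congrFun h' a), adjMatrix_mulVec_add_smul_of_boxProd_top hv hε⟩)
  by_contra! ⟨h₁, h₂⟩
  refine hv0 (funext fun ⟨a, i⟩ ↦ ?_)
  have hsum := combination_eq_zero 1 (by norm_num) h₁ a
  have hdiff := combination_eq_zero (-1) (by norm_num) (by rwa [sub_neg_eq_add]) a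
  fin_cases i <;> simp only [Fin.zero_eta, Fin.mk_one, Pi.zero_apply] <;> linarith

theorem spectrum_adjMatrix_boxProd_top :
    spectrum ℝ ((G □ K₂).adjMatrix ℝ) =
      {μ | μ - 1 ∈ spectrum ℝ (G.adjMatrix ℝ) ∨ μ + 1 ∈ spectrum ℝ (G.adjMatrix ℝ)} := by
  ext μ
  refine ⟨mem_spectrum_adjMatrix_of_mem_spectrum_boxProd_top, ?_⟩
  rintro (h | h)
  · simpa using add_mem_spectrum_adjMatrix_boxProd_top (ε := 1) (by norm_num) h
  · simpa using add_mem_spectrum_adjMatrix_boxProd_top (ε := -1) (by norm_num) h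

theorem sSup_spectrum_adjMatrix_boxProd_top [Nonempty V] :
    sSup (spectrum ℝ ((G □ K₂).adjMatrix ℝ)) = sSup (spectrum ℝ (G.adjMatrix ℝ)) + 1 := by
  have hmax : IsGreatest (spectrum ℝ (G.adjMatrix ℝ)) (sSup (spectrum ℝ (G.adjMatrix ℝ))) :=
    (Matrix.finite_spectrum _).isCompact.isGreatest_sSup G.nonempty_spectrum_adjMatrix
  rw [spectrum_adjMatrix_boxProd_top, (hmax.setOf_sub_mem_or_add_mem zero_le_one).csSup_eq]

end SimpleGraph

/-- `G_{2n}` is isomorphic to the box product `G_n □ K_2`, and consequently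
`λ_{2n} = λ_n + 1`. -/
theorem bricklayer_double (n : ℕ) (hn : 1 ≤ n) :
    Nonempty (bricklayerGraph (2 * n) ≃g
        SimpleGraph.boxProd (bricklayerGraph n) (⊤ : SimpleGraph (Fin 2))) ∧
      bricklayerLambda (2 * n) = bricklayerLambda n + 1 := by
  classical
  have : Nonempty (Fin n) := ⟨⟨0, hn⟩⟩
  let e := bricklayerGraphDoubleIso n
  refine ⟨⟨e⟩, ?_⟩
  rw [bricklayerLambda, bricklayerLambda, ← e.spectrum_adjMatrix_eq,
    SimpleGraph.sSup_spectrum_adjMatrix_boxProd_top]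
end

section
/- For every integer d ≥ 1, the polynomial ∏_{i=1}^{d−1} (x − (d − 2i))^{binom(d,i) − 1} divides both χ_{2^d−1}(x) and χ_{2^d+1}(x) in ℝ[x]. -/
/-- `χ_n`: the characteristic polynomial `det (x·I - A)` of the adjacency matrix of `G_n`. -/
noncomputable def bricklayerCharpoly (n : ℕ) : Polynomial ℝ :=
  ((bricklayerGraph n).adjMatrix ℝ).charpoly

/-! The Walsh characters `χ_S(v) = ∏_{j ∈ S} (-1)^{v_j}`, `S ⊆ {0, …, d-1}`, are orthogonal on
the hypercube `Q_d = G_{2^d}`, and `χ_S` is an eigenvector of `Q_d` for `d - 2|S|`. Fixing `T`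
with `|T| = i`, the `C(d,i) - 1` differences `χ_S - χ_T` (`|S| = i`, `S ≠ T`) are linearly
independent and vanish at `0`, `2^d - 1` and `2^d`. So they stay eigenvectors for `d - 2i` when
the vertex `2^d - 1` is deleted (giving `G_{2^d-1}`) or the pendant vertex `2^d` is attached to `0`
(giving `G_{2^d+1}`). Geometric multiplicity bounds algebraic multiplicity, and the factors for
distinct `i` are coprime. -/

open Polynomial Finset Matrix

theorem Matrix.pow_card_dvd_charpoly_of_linearIndependent {K n ι : Type*} [Field K] [Fintype n]
    [DecidableEq n] [Fintype ι] (A : Matrix n n K) (μ : K) {v : ι → n → K}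
    (hv : LinearIndependent K v) (hAv : ∀ i, A *ᵥ v i = μ • v i) :
    (X - C μ) ^ Fintype.card ι ∣ A.charpoly := by
  have hspan : Submodule.span K (Set.range v) ≤ Module.End.eigenspace (toLin' A) μ :=
    Submodule.span_le.mpr <| Set.range_subset_iff.mpr fun i =>
      Module.End.mem_eigenspace_iff.mpr (hAv i)
  calc (X - C μ) ^ Fintype.card ι
      ∣ (X - C μ) ^ A.charpoly.rootMultiplicity μ := by
        refine pow_dvd_pow _ ?_
        rw [← finrank_span_eq_card hv, ← Matrix.charpoly_toLin']
        exact (Submodule.finrank_mono hspan).trans (LinearMap.finrank_eigenspace_le _ μ)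
    _ ∣ A.charpoly := pow_rootMultiplicity_dvd _ μ

theorem linearIndependent_restrict_of_apply_eq_zero {K ι : Type*} [Semiring K] {F : ι → ℕ → K}
    {m n : ℕ} (hF : LinearIndependent K fun i (v : Fin m) => F i v)
    (hzero : ∀ i v, n ≤ v → v < m → F i v = 0) :
    LinearIndependent K fun i (v : Fin n) => F i v := by
  let extend : (Fin n → K) →ₗ[K] Fin m → K :=
    LinearMap.pi fun v => if h : (v : ℕ) < n then LinearMap.proj ⟨v, h⟩ else 0
  refine .of_comp extend ?_
  convert hF using 1
  ext i v
  by_cases h : (v : ℕ) < n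
  · simp [extend, h]
  · simp [extend, h, hzero i v (not_lt.mp h) v.isLt]

theorem sum_range_two_pow_eq_zero_of_xor_antiperiodic {M : Type*} [AddCommGroup M] {d k : ℕ}
    (hk : k < d) {f : ℕ → M} (hf : ∀ v, f (v ^^^ 2 ^ k) = -f v) :
    ∑ v ∈ range (2 ^ d), f v = 0 := by
  have hk' : 2 ^ k < 2 ^ d := Nat.pow_lt_pow_right one_lt_two hk
  refine sum_involution (fun v _ => v ^^^ 2 ^ k) (fun v _ => by rw [hf, add_neg_cancel])
    (fun v _ _ => by simp)
    (fun v hv => mem_range.mpr (Nat.xor_lt_two_pow (mem_range.mp hv) hk'))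
    (fun v _ => xor_cancel_right v _)

def walsh {d : ℕ} (S : Finset (Fin d)) (v : ℕ) : ℝ :=
  ∏ j ∈ S, if v.testBit j then -1 else 1

namespace walsh

variable {d : ℕ} (S : Finset (Fin d))

theorem apply_xor_two_pow (k : Fin d) (v : ℕ) :
    walsh S (v ^^^ 2 ^ (k : ℕ)) = (if k ∈ S then -1 else 1) * walsh S v := by
  have hfactor : ∀ j : Fin d, (if (v ^^^ 2 ^ (k : ℕ)).testBit j then (-1 : ℝ) else 1) =
      (if j = k then -1 else 1) * if v.testBit j then -1 else 1 := by
    intro j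
    by_cases hjk : j = k
    · subst hjk; cases h : v.testBit j <;> simp [Nat.testBit_xor, h]
    · simp [Nat.testBit_xor, hjk, Fin.val_ne_of_ne (Ne.symm hjk)]
  simp only [walsh, hfactor, prod_mul_distrib, prod_ite_eq']

theorem mul_self (v : ℕ) : walsh S v * walsh S v = 1 := by
  rw [walsh, ← prod_mul_distrib]
  exact prod_eq_one fun j _ => by split_ifs <;> norm_num

theorem apply_zero : walsh S 0 = 1 := by simp [walsh]

theorem apply_two_pow : walsh S (2 ^ d) = 1 :=
  prod_eq_one fun j _ => by simp [j.isLt.ne']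

theorem apply_two_pow_sub_one : walsh S (2 ^ d - 1) = (-1) ^ #S := by
  simp [walsh, Nat.testBit_two_pow_sub_one]

theorem sum_apply_xor_two_pow (v : ℕ) :
    ∑ k : Fin d, walsh S (v ^^^ 2 ^ (k : ℕ)) = ((d : ℝ) - 2 * #S) * walsh S v := by
  have hsign (k : Fin d) : (if k ∈ S then (-1 : ℝ) else 1) = 1 - 2 * if k ∈ S then 1 else 0 := by
    split_ifs <;> norm_num
  simp only [apply_xor_two_pow, ← sum_mul, hsign, sum_sub_distrib, ← mul_sum, sum_boole]
  simp

theorem sum_range_mul (T : Finset (Fin d)) :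
    ∑ v ∈ range (2 ^ d), walsh S v * walsh T v = if S = T then 2 ^ d else 0 := by
  split_ifs with hST
  · simp [hST, mul_self]
  obtain ⟨k, hk⟩ : ∃ k, ¬(k ∈ S ↔ k ∈ T) := by
    by_contra! h
    exact hST (Finset.ext h)
  refine sum_range_two_pow_eq_zero_of_xor_antiperiodic k.isLt fun v => ?_
  rw [apply_xor_two_pow, apply_xor_two_pow]
  by_cases hkS : k ∈ S <;> simp_all

theorem linearIndependent :
    LinearIndependent ℝ fun (S : Finset (Fin d)) (v : Fin (2 ^ d)) => walsh S v := by
  refine Fintype.linearIndependent_iff.mpr fun g hg T => ?_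
  have hzero (v : ℕ) (hv : v < 2 ^ d) : ∑ S, g S * walsh S v = 0 := by
    simpa using congrFun hg ⟨v, hv⟩
  have : g T * 2 ^ d = 0 := calc
    g T * 2 ^ d = ∑ S, g S * ∑ v ∈ range (2 ^ d), walsh S v * walsh T v := by
      simp [sum_range_mul]
    _ = ∑ v ∈ range (2 ^ d), (∑ S, g S * walsh S v) * walsh T v := by
      simp only [mul_sum, sum_mul, mul_assoc]
      exact sum_comm
    _ = 0 := sum_eq_zero fun v hv => by rw [hzero v (mem_range.mp hv), zero_mul]
  simpa using this

end walsh

theorem Nat.two_pow_le_xor_two_pow {u d : ℕ} (h : u < 2 ^ d) : 2 ^ d ≤ u ^^^ 2 ^ d :=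
  Nat.ge_two_pow_of_testBit <| by simp [Nat.testBit_xor, Nat.testBit_eq_false_of_lt h]

theorem bricklayerGraph_adjMatrix_mulVec_apply {n D : ℕ} (hn : n ≤ 2 ^ D) (f : ℕ → ℝ)
    (u : Fin n) :
    ((bricklayerGraph n).adjMatrix ℝ *ᵥ fun v => f v) u =
      ∑ k ∈ range D with (u : ℕ) ^^^ 2 ^ k < n, f (u ^^^ 2 ^ k) := by
  rw [SimpleGraph.adjMatrix_mulVec_apply, eq_comm]
  refine sum_bij (fun k hk => ⟨u ^^^ 2 ^ k, (mem_filter.mp hk).2⟩)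
    (fun k _ => (SimpleGraph.mem_neighborFinset _ _ _).mpr ⟨k, xor_cancel_left _ _⟩)
    (fun a _ b _ hab => Nat.pow_right_injective le_rfl
      (Nat.xor_right_injective (congrArg Fin.val hab))) (fun v hv => ?_) (fun _ _ => rfl)
  obtain ⟨k, hk⟩ := (SimpleGraph.mem_neighborFinset _ _ _).mp hv
  have hv_eq : (v : ℕ) = u ^^^ 2 ^ k := by rw [← hk, xor_cancel_left]
  have hkD : k < D := (Nat.pow_lt_pow_iff_right one_lt_two).mp <|
    hk ▸ Nat.xor_lt_two_pow (u.isLt.trans_le hn) (v.isLt.trans_le hn)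
  exact ⟨k, mem_filter.mpr ⟨mem_range.mpr hkD, hv_eq ▸ v.isLt⟩, Fin.ext hv_eq.symm⟩

theorem bricklayerGraph_two_pow_sub_one_adjMatrix_mulVec_eq_smul {d : ℕ} {μ : ℝ} {f : ℕ → ℝ}
    (hf : ∀ u, ∑ k : Fin d, f (u ^^^ 2 ^ (k : ℕ)) = μ * f u) (htop : f (2 ^ d - 1) = 0) :
    (bricklayerGraph (2 ^ d - 1)).adjMatrix ℝ *ᵥ (fun v => f v) = μ • fun v : Fin _ => f v := by
  ext u
  rw [bricklayerGraph_adjMatrix_mulVec_apply (Nat.sub_le _ _), sum_filter_of_ne, sum_range, hf]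
  · rfl
  intro k hk hne
  have hlt : (u : ℕ) ^^^ 2 ^ k < 2 ^ d :=
    Nat.xor_lt_two_pow (by omega) (Nat.pow_lt_pow_right one_lt_two (mem_range.mp hk))
  have hne' : (u : ℕ) ^^^ 2 ^ k ≠ 2 ^ d - 1 := fun h => hne (by rw [h]; exact htop)
  omega

theorem bricklayerGraph_two_pow_add_one_adjMatrix_mulVec_eq_smul {d : ℕ} {μ : ℝ} {f : ℕ → ℝ}
    (hf : ∀ u, ∑ k : Fin d, f (u ^^^ 2 ^ (k : ℕ)) = μ * f u) (hbot : f 0 = 0)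
    (htop : f (2 ^ d) = 0) :
    (bricklayerGraph (2 ^ d + 1)).adjMatrix ℝ *ᵥ (fun v => f v) = μ • fun v : Fin _ => f v := by
  ext u
  have hn : 2 ^ d + 1 ≤ 2 ^ (d + 1) := by rw [pow_succ]; have := d.one_le_two_pow; omega
  rw [bricklayerGraph_adjMatrix_mulVec_apply hn]
  rcases (Nat.lt_succ_iff.mp u.isLt).lt_or_eq with hu | hu
  · have hlast : (if (u : ℕ) ^^^ 2 ^ d < 2 ^ d + 1 then f (u ^^^ 2 ^ d) else 0) = 0 := by
      split_ifs with h
      · rwa [show (u : ℕ) ^^^ 2 ^ d = 2 ^ d by have := Nat.two_pow_le_xor_two_pow hu; omega]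
      · rfl
    have hindep (k : Fin d) : (u : ℕ) ^^^ 2 ^ (k : ℕ) < 2 ^ d + 1 :=
      Nat.lt_succ_of_lt (Nat.xor_lt_two_pow hu (Nat.pow_lt_pow_right one_lt_two k.isLt))
    rw [sum_filter, sum_range_succ, hlast, add_zero, sum_range]
    simp only [hindep, if_true, hf]
    rfl
  · rw [Pi.smul_apply, hu, htop, smul_zero]
    refine sum_eq_zero fun k hk => ?_
    obtain ⟨hk, hlt⟩ := mem_filter.mp hk
    rcases (Nat.lt_succ_iff.mp (mem_range.mp hk)).lt_or_eq with hk | rfl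
    · have hle := Nat.two_pow_le_xor_two_pow (Nat.pow_lt_pow_right one_lt_two hk)
      have heq : 2 ^ k ^^^ 2 ^ d = 2 ^ d := by rw [Nat.xor_comm] at hlt; omega
      have h0 := xor_cancel_right (2 ^ k) (2 ^ d)
      rw [heq, Nat.xor_self] at h0
      exact absurd h0 (pow_ne_zero k two_ne_zero).symm
    · rw [Nat.xor_self, hbot]

theorem X_sub_C_pow_choose_sub_one_dvd_bricklayerCharpoly {d i n : ℕ} (hi : i ≤ d)
    (hn : n = 2 ^ d - 1 ∨ n = 2 ^ d + 1) :
    (X - C ((d : ℝ) - 2 * i)) ^ (d.choose i - 1) ∣ bricklayerCharpoly n := by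
  obtain ⟨T, -, hT⟩ := exists_subset_card_eq (s := (univ : Finset (Fin d))) (by simpa using hi)
  let T₀ : {S : Finset (Fin d) // #S = i} := ⟨T, hT⟩
  let F (S : {S // S ≠ T₀}) : ℕ → ℝ := walsh S.1.1 - walsh T
  have hcard : Fintype.card {S // S ≠ T₀} = d.choose i - 1 := by
    simp [Fintype.card_subtype_compl]
  have hindep : LinearIndependent ℝ fun S (v : Fin (2 ^ d)) => F S v :=
    (affineIndependent_iff_linearIndependent_vsub ℝ _ T₀).mp
      (walsh.linearIndependent.comp _ Subtype.val_injective).affineIndependent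
  have heig (S) (u : ℕ) : ∑ k : Fin d, F S (u ^^^ 2 ^ (k : ℕ)) = ((d : ℝ) - 2 * i) * F S u := by
    simp only [F, Pi.sub_apply, sum_sub_distrib, walsh.sum_apply_xor_two_pow, S.1.2, hT]
    ring
  unfold bricklayerCharpoly
  rw [← hcard]
  rcases hn with rfl | rfl
  · have htop (S) : F S (2 ^ d - 1) = 0 := by
      simp [F, walsh.apply_two_pow_sub_one, S.1.2, hT]
    refine Matrix.pow_card_dvd_charpoly_of_linearIndependent _ _
      (linearIndependent_restrict_of_apply_eq_zero hindep fun S v h1 h2 => ?_)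
      fun S => bricklayerGraph_two_pow_sub_one_adjMatrix_mulVec_eq_smul (heig S) (htop S)
    rw [show v = 2 ^ d - 1 by omega, htop]
  · exact Matrix.pow_card_dvd_charpoly_of_linearIndependent _ _
      (linearIndependent_restrict_of_apply_eq_zero hindep fun S v h1 h2 => by omega)
      fun S => bricklayerGraph_two_pow_add_one_adjMatrix_mulVec_eq_smul (heig S)
        (by simp [F, walsh.apply_zero]) (by simp [F, walsh.apply_two_pow])

theorem bricklayer_charpoly_dvd_general (d : ℕ) :
    (∏ i ∈ Finset.Icc 1 (d - 1),
        (Polynomial.X - Polynomial.C ((d : ℝ) - 2 * i)) ^ (d.choose i - 1)) ∣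
        bricklayerCharpoly (2 ^ d - 1) ∧
      (∏ i ∈ Finset.Icc 1 (d - 1),
        (Polynomial.X - Polynomial.C ((d : ℝ) - 2 * i)) ^ (d.choose i - 1)) ∣
        bricklayerCharpoly (2 ^ d + 1) := by
  have hcoprime : Set.Pairwise (Icc 1 (d - 1) : Set ℕ)
      (Function.onFun IsCoprime fun i : ℕ => (X - C ((d : ℝ) - 2 * i)) ^ (d.choose i - 1)) :=
    fun a _ b _ hab => (pairwise_coprime_X_sub_C (s := fun i : ℕ => (d : ℝ) - 2 * i)
        (fun a b h => by simpa using h) hab).pow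
  have hle {i : ℕ} (hi : i ∈ Icc 1 (d - 1)) : i ≤ d := by
    rw [mem_Icc] at hi
    omega
  exact ⟨prod_dvd_of_coprime hcoprime fun i hi =>
      X_sub_C_pow_choose_sub_one_dvd_bricklayerCharpoly (hle hi) (.inl rfl),
    prod_dvd_of_coprime hcoprime fun i hi =>
      X_sub_C_pow_choose_sub_one_dvd_bricklayerCharpoly (hle hi) (.inr rfl)⟩

/-- `∏_{i=1}^{d-1} (x - (d - 2i))^{C(d,i) - 1}` divides both `χ_{2^d - 1}` and
`χ_{2^d + 1}` in `ℝ[x]`. -/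
theorem bricklayer_charpoly_dvd (d : ℕ) (hd : 1 ≤ d) :
    (∏ i ∈ Finset.Icc 1 (d - 1),
        (Polynomial.X - Polynomial.C ((d : ℝ) - 2 * i)) ^ (d.choose i - 1)) ∣
        bricklayerCharpoly (2 ^ d - 1) ∧
      (∏ i ∈ Finset.Icc 1 (d - 1),
        (Polynomial.X - Polynomial.C ((d : ℝ) - 2 * i)) ^ (d.choose i - 1)) ∣
        bricklayerCharpoly (2 ^ d + 1) :=
  bricklayer_charpoly_dvd_general d
end

section
/- For every integer d ≥ 1, the characteristic polynomials of the bricklayer's graphs satisfy χ_{2^d+1}(x) = x · χ_{2^d}(x) − χ_{2^d−1}(x) in ℝ[x]. -/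
/-!
In `G_{2^d+1}` the vertex `2^d` is pendant: its only neighbour is `0`. Expanding
`det (x·I - A)` along that vertex and then along vertex `0` gives the pendant-vertex rule
`χ(G) = x · χ(G - 2^d) - χ(G - 2^d - 0)`. Here `G - 2^d = G_{2^d}`, and `G_{2^d} - 0` is
isomorphic to `G_{2^d - 1}` through `u ↦ 2^d - 1 - u`, which complements the `d` bits and
therefore preserves XOR.
-/

open Polynomial Matrix

theorem Nat.xor_two_pow_sub_one_of_lt {x d : ℕ} (hx : x < 2 ^ d) :
    x ^^^ (2 ^ d - 1) = 2 ^ d - 1 - x := by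
  have h := BitVec.toNat_not (x := BitVec.ofNat d x)
  rwa [← BitVec.xor_allOnes, BitVec.toNat_xor, BitVec.toNat_allOnes, BitVec.toNat_ofNat,
    Nat.mod_eq_of_lt hx] at h

theorem Nat.two_pow_sub_one_sub_xor {x y d : ℕ} (hx : x < 2 ^ d) (hy : y < 2 ^ d) :
    (2 ^ d - 1 - x) ^^^ (2 ^ d - 1 - y) = x ^^^ y := by
  rw [← Nat.xor_two_pow_sub_one_of_lt hx, ← Nat.xor_two_pow_sub_one_of_lt hy, Nat.xor_comm y,
    ← Nat.xor_assoc, Nat.xor_xor_cancel_right]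

theorem Nat.two_pow_xor_eq_two_pow_iff {x d k : ℕ} (hx : x < 2 ^ d) :
    2 ^ d ^^^ x = 2 ^ k ↔ x = 0 ∧ k = d := by
  refine ⟨fun h => ?_, fun ⟨hx0, hk⟩ => by simp [hx0, hk]⟩
  obtain rfl : k = d := by
    by_contra hkd
    have hbit := congrArg (Nat.testBit · d) h
    simp only [Nat.testBit_xor, Nat.testBit_two_pow_self, Nat.testBit_two_pow,
      Nat.testBit_lt_two_pow hx] at hbit
    simp [hkd] at hbit
  exact ⟨by simpa using h, rfl⟩

theorem Matrix.charmatrix_submatrix {R m n : Type*} [CommRing R] [Fintype m] [DecidableEq m]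
    [Fintype n] [DecidableEq n] (A : Matrix n n R) {f : m → n} (hf : Function.Injective f) :
    charmatrix (A.submatrix f f) = (charmatrix A).submatrix f f := by
  ext i j
  simp [charmatrix_apply, diagonal_apply, hf.eq_iff]

theorem Matrix.det_of_last_row_col_vanish {R : Type*} [CommRing R] {n : ℕ}
    (M : Matrix (Fin (n + 2)) (Fin (n + 2)) R)
    (hrow : ∀ j, j ≠ 0 → j ≠ Fin.last _ → M (Fin.last _) j = 0)
    (hcol : ∀ i, i ≠ 0 → i ≠ Fin.last _ → M i (Fin.last _) = 0) :
    M.det = M (Fin.last _) (Fin.last _) * (M.submatrix Fin.castSucc Fin.castSucc).det -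
      M (Fin.last _) 0 * M 0 (Fin.last _) *
        (M.submatrix (fun i : Fin n => i.castSucc.succ) (fun i => i.castSucc.succ)).det := by
  have hB : (M.submatrix Fin.castSucc Fin.succ).det = (-1) ^ n * M 0 (Fin.last _) *
      (M.submatrix (fun i : Fin n => i.castSucc.succ) (fun i => i.castSucc.succ)).det := by
    rw [det_succ_column _ (Fin.last n), Fintype.sum_eq_single 0]
    · simp only [submatrix_apply, Fin.succAbove_zero, Fin.succAbove_last, Fin.val_zero,
        Fin.val_last, zero_add, Fin.castSucc_zero, Fin.succ_last, submatrix_submatrix]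
      rfl
    · intro i hi
      have : M i.castSucc (Fin.last (n + 1)) = 0 :=
        hcol _ (by simpa using hi) (Fin.castSucc_lt_last i).ne
      simp [this]
  rw [det_succ_row M (Fin.last _), Fintype.sum_eq_add 0 (Fin.last _) (by simp [Fin.ext_iff])]
  · simp only [Fin.succAbove_zero, Fin.succAbove_last, Fin.val_last, Fin.val_zero, hB]
    have hsq : ((-1 : R) ^ n) * (-1) ^ n = 1 := by rw [← pow_add, Even.neg_one_pow ⟨n, rfl⟩]
    rw [Even.neg_one_pow ⟨n + 1, rfl⟩, add_zero, pow_succ]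
    linear_combination (-(M (Fin.last _) 0 * M 0 (Fin.last _) *
      (M.submatrix (fun i : Fin n => i.castSucc.succ) (fun i => i.castSucc.succ)).det)) * hsq
  · rintro j ⟨hj0, hjl⟩
    simp [hrow j hj0 hjl]

theorem SimpleGraph.charpoly_adjMatrix_of_adj_last_iff {R : Type*} [CommRing R] {n : ℕ}
    (G : SimpleGraph (Fin (n + 2))) [DecidableRel G.Adj]
    (h : ∀ v, G.Adj (Fin.last _) v ↔ v = 0) :
    (G.adjMatrix R).charpoly =
      X * ((G.adjMatrix R).submatrix Fin.castSucc Fin.castSucc).charpoly -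
        ((G.adjMatrix R).submatrix (fun i : Fin n => i.castSucc.succ)
          (fun i => i.castSucc.succ)).charpoly := by
  have hlast0 : Fin.last (n + 1) ≠ 0 := by simp [Fin.ext_iff]
  have hA : ∀ v, G.adjMatrix R (Fin.last _) v = if v = 0 then 1 else 0 := fun v =>
    if_congr (h v) rfl rfl
  have hA' : ∀ v, G.adjMatrix R v (Fin.last _) = if v = 0 then 1 else 0 := fun v =>
    if_congr ((G.adj_comm _ _).trans (h v)) rfl rfl
  rw [charpoly, charpoly, charpoly, charmatrix_submatrix _ (Fin.castSucc_injective _),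
    charmatrix_submatrix _ fun i j hij => Fin.castSucc_injective _ (Fin.succ_injective _ hij),
    det_of_last_row_col_vanish]
  · simp [hlast0, hlast0.symm, hA, hA', -adjMatrix_apply]
  · intro j hj0 hjl
    simp [Ne.symm hjl, hA, hj0, -adjMatrix_apply]
  · intro i hi0 hil
    simp [hil, hA', hi0, -adjMatrix_apply]

theorem bricklayerGraph_adjMatrix_submatrix {R : Type*} [NonAssocSemiring R] {a b : ℕ}
    (f : Fin a → Fin b) (hf : ∀ u v, (f u : ℕ) ^^^ f v = u ^^^ v) :
    ((bricklayerGraph b).adjMatrix R).submatrix f f = (bricklayerGraph a).adjMatrix R := by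
  ext u v
  exact if_congr (by simp only [bricklayerGraph, hf]) rfl rfl

theorem bricklayerGraph_adj_last_iff {n d : ℕ} (hn : n + 1 = 2 ^ d) (v : Fin (n + 2)) :
    (bricklayerGraph (n + 2)).Adj (Fin.last _) v ↔ v = 0 := by
  by_cases hv : v = Fin.last _
  · subst hv
    simp [Fin.ext_iff]
  · have hlt : (v : ℕ) < 2 ^ d := by rw [← hn]; exact Fin.val_lt_last hv
    simp only [bricklayerGraph, Fin.val_last, hn, Nat.two_pow_xor_eq_two_pow_iff hlt, Fin.ext_iff]
    simp

theorem bricklayerGraph_charpoly_submatrix_succ {R : Type*} [CommRing R] {m d : ℕ}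
    (hm : m + 1 = 2 ^ d) :
    (((bricklayerGraph (m + 2)).adjMatrix R).submatrix (fun i : Fin m => i.castSucc.succ)
      (fun i => i.castSucc.succ)).charpoly = ((bricklayerGraph m).adjMatrix R).charpoly := by
  have hval : ∀ u : Fin m, ((Fin.revPerm u).castSucc.succ : ℕ) = 2 ^ d - 1 - u := fun u => by
    simp only [Fin.revPerm_apply, Fin.val_succ, Fin.val_castSucc, Fin.val_rev]
    omega
  rw [← charpoly_reindex Fin.revPerm, reindex_apply, Fin.revPerm_symm, submatrix_submatrix,
    bricklayerGraph_adjMatrix_submatrix]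
  intro u v
  simp only [Function.comp_apply, hval]
  exact Nat.two_pow_sub_one_sub_xor (by omega) (by omega)

theorem bricklayer_charpoly_rec_general (d : ℕ) :
    bricklayerCharpoly (2 ^ d + 1) =
      Polynomial.X * bricklayerCharpoly (2 ^ d) - bricklayerCharpoly (2 ^ d - 1) := by
  obtain ⟨m, hm⟩ : ∃ m, m + 1 = 2 ^ d := ⟨_, Nat.sub_add_cancel Nat.one_le_two_pow⟩
  rw [← hm, Nat.add_sub_cancel]
  unfold bricklayerCharpoly
  rw [(bricklayerGraph (m + 2)).charpoly_adjMatrix_of_adj_last_iff (bricklayerGraph_adj_last_iff hm),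
    bricklayerGraph_adjMatrix_submatrix Fin.castSucc fun _ _ => rfl,
    bricklayerGraph_charpoly_submatrix_succ hm]

/-- `χ_{2^d + 1}(x) = x · χ_{2^d}(x) - χ_{2^d - 1}(x)` in `ℝ[x]`. -/
theorem bricklayer_charpoly_rec (d : ℕ) (hd : 1 ≤ d) :
    bricklayerCharpoly (2 ^ d + 1) =
      Polynomial.X * bricklayerCharpoly (2 ^ d) - bricklayerCharpoly (2 ^ d - 1) :=
  bricklayer_charpoly_rec_general d
end
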